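/- Let q ≥ 2 and m ≥ 1 be integers and let X be a random variable with values in [0,1) having a probability density function f. Suppose there are constants c_0, …, c_{q^m−1} such that f = c_j Lebesgue-almost everywhere on the interval [j·q^{−m}, (j+1)·q^{−m}) for each j = 0, 1, …, q^m − 1. Then for every n ≥ m, the integer random variable ⌊q^n X⌋ (which encodes the first n base-q digits of X) is independent of T^n(X), and T^n(X) is uniformly distributed on [0,1). -/

import Mathlib

open MeasureTheory Set

/-- The base-`q` map `T(x) = q·x − ⌊q·x⌋`. -/
noncomputable def T (q : ℕ) : ℝ → ℝ := fun x => Int.fract ((q : ℝ) * x)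

/-! On the event `⌊q^n X⌋ = k` one has `T^n X = q^n X - k`, so
`{⌊q^n X⌋ = k, T^n X ∈ t} = {q^n X - k ∈ t ∩ [0,1)}`: `X` lies in an affine copy of `t ∩ [0,1)`,
scaled by `q^{-n}`, inside `[k q^{-n}, (k+1) q^{-n})`. As `n ≥ m`, this interval lies in one of the
intervals where the density is constant, so the event has probability `C_k · |t ∩ [0,1)|`;
`t = [0,1)` gives `C_k = ℙ(⌊q^n X⌋ = k)`. Summing over `k` yields both the uniform law of
`T^n X` and the independence. -/

open scoped ENNReal

lemma T_fract (q : ℕ) (y : ℝ) : T q (Int.fract y) = Int.fract ((q : ℝ) * y) := by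
  have h : (q : ℝ) * Int.fract y = (q : ℝ) * y - ((q * ⌊y⌋ : ℤ) : ℝ) := by
    rw [Int.fract]; push_cast; ring
  rw [T, h, Int.fract_sub_intCast]

lemma T_iterate_of_mem_Ico (q n : ℕ) {x : ℝ} (hx : x ∈ Ico (0 : ℝ) 1) :
    (T q)^[n] x = Int.fract ((q : ℝ) ^ n * x) := by
  induction n with
  | zero => simpa using (Int.fract_eq_self.2 hx).symm
  | succ n ih => rw [Function.iterate_succ_apply', ih, T_fract, ← mul_assoc, ← pow_succ']

lemma Int.floor_eq_and_fract_mem_iff {R : Type*} [Ring R] [LinearOrder R] [IsOrderedRing R]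
    [FloorRing R] (a : R) (k : ℤ) (t : Set R) :
    ⌊a⌋ = k ∧ Int.fract a ∈ t ↔ a - k ∈ t ∩ Ico 0 1 := by
  constructor
  · rintro ⟨rfl, h⟩
    exact ⟨h, Int.fract_nonneg a, Int.fract_lt_one a⟩
  · rintro ⟨h, h0, h1⟩
    have hk : ⌊a⌋ = k := Int.floor_eq_iff.2 ⟨sub_nonneg.1 h0, sub_lt_iff_lt_add'.1 h1⟩
    exact ⟨hk, by rwa [Int.fract, hk]⟩

lemma Real.volume_preimage_mul_sub {a : ℝ} (ha : a ≠ 0) (b : ℝ) (s : Set ℝ) :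
    volume ((fun x => a * x - b) ⁻¹' s) = ENNReal.ofReal |a⁻¹| * volume s := by
  change volume ((a * ·) ⁻¹' ((· + -b) ⁻¹' s)) = _
  rw [Real.volume_preimage_mul_left ha, measure_preimage_add_right]

lemma Ico_div_subset_Ico_div (κ M d : ℕ) (hd : 0 < d) :
    Ico ((κ : ℝ) / (M * d)) ((κ + 1) / (M * d)) ⊆
      Ico ((κ / d : ℕ) / (M : ℝ)) (((κ / d : ℕ) + 1) / (M : ℝ)) := by
  have hd' : (d : ℝ) ≠ 0 := by positivity
  have hlow : ((κ / d : ℕ) : ℝ) * d ≤ κ := by exact_mod_cast Nat.div_mul_le_self κ d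
  have hupp : (κ : ℝ) + 1 ≤ ((κ / d : ℕ) + 1) * d := by
    have := Nat.lt_div_mul_add (a := κ) hd
    exact_mod_cast (by rw [add_mul, one_mul]; omega : κ + 1 ≤ (κ / d + 1) * d)
  rw [← mul_div_mul_right _ (M : ℝ) hd', ← mul_div_mul_right (_ + 1) (M : ℝ) hd']
  exact Ico_subset_Ico (by gcongr) (by gcongr)

lemma measure_preimage_eq_const_mul_of_ae_eq {Ω α : Type*} [MeasurableSpace Ω]
    [MeasurableSpace α] {P : Measure Ω} {μ : Measure α} {X : Ω → α} (hX : Measurable X)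
    {g : α → ℝ≥0∞} (hlaw : P.map X = μ.withDensity g) {I S : Set α} {c : ℝ≥0∞}
    (hg : ∀ᵐ x ∂μ.restrict I, g x = c) (hSI : S ⊆ I) (hS : MeasurableSet S) :
    P (X ⁻¹' S) = c * μ S := by
  rw [← Measure.map_apply hX hS, hlaw, withDensity_apply _ hS,
    lintegral_congr_ae (ae_restrict_of_ae_restrict_of_subset hSI hg), setLIntegral_const]

lemma preimage_pow_mul_sub_Ico_subset {q m n : ℕ} (hq : 0 < q) (hn : m ≤ n) (κ : ℕ) :
    (fun x : ℝ => (q : ℝ) ^ n * x - κ) ⁻¹' Ico 0 1 ⊆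
      Ico (((κ / q ^ (n - m) : ℕ) : ℝ) / (q : ℝ) ^ m)
        (((κ / q ^ (n - m) : ℕ) + 1) / (q : ℝ) ^ m) := by
  have hsplit : (q : ℝ) ^ n = ((q ^ m : ℕ) : ℝ) * ((q ^ (n - m) : ℕ) : ℝ) := by
    push_cast; rw [← pow_add, Nat.add_sub_cancel' hn]
  change ((q : ℝ) ^ n * ·) ⁻¹' ((· - (κ : ℝ)) ⁻¹' Ico 0 1) ⊆ _
  rw [preimage_sub_const_Ico, preimage_const_mul_Ico₀ _ _ (by positivity), zero_add, add_comm 1,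
    hsplit]
  simpa using Ico_div_subset_Ico_div κ (q ^ m) (q ^ (n - m)) (by positivity)

section Fibers

variable {Ω α β : Type*} [MeasurableSpace Ω] [MeasurableSpace α] [MeasurableSpace β]
  [Countable α] [MeasurableSingletonClass α] {μ : Measure Ω} {Y : Ω → α}

lemma measure_preimage_inter_eq_mul_of_fiber (hY : Measurable Y) {E : Set Ω} {r : ℝ≥0∞}
    (h : ∀ a, μ (Y ⁻¹' {a} ∩ E) = μ (Y ⁻¹' {a}) * r) (s : Set α) :
    μ (Y ⁻¹' s ∩ E) = μ (Y ⁻¹' s) * r := by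
  have hfib : ∀ a ∈ s, MeasurableSet (Y ⁻¹' {a}) := fun a _ => hY (measurableSet_singleton a)
  rw [← Measure.restrict_apply (hY s.to_countable.measurableSet),
    ← tsum_measure_preimage_singleton s.to_countable hfib,
    ← tsum_measure_preimage_singleton s.to_countable hfib, ← ENNReal.tsum_mul_right]
  refine tsum_congr fun a => ?_
  rw [Measure.restrict_apply (hfib a a.2), h]

theorem indepFun_and_map_eq_of_measure_fiber_inter [IsProbabilityMeasure μ] {Z : Ω → β}
    (hY : Measurable Y) (hZ : Measurable Z) {ν : Measure β}
    (h : ∀ a t, MeasurableSet t → μ (Y ⁻¹' {a} ∩ Z ⁻¹' t) = μ (Y ⁻¹' {a}) * ν t) :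
    ProbabilityTheory.IndepFun Y Z μ ∧ μ.map Z = ν := by
  have key t ht := measure_preimage_inter_eq_mul_of_fiber hY (h · t ht)
  have hZν : ∀ t, MeasurableSet t → μ (Z ⁻¹' t) = ν t := fun t ht => by
    simpa using key t ht univ
  refine ⟨ProbabilityTheory.indepFun_iff_measure_inter_preimage_eq_mul.2 fun s t _ ht => ?_,
    Measure.ext fun t ht => ?_⟩
  · rw [key t ht s, hZν t ht]
  · rw [Measure.map_apply hZ ht, hZν t ht]

end Fibers

lemma measure_floor_eq_inter_fract_mem {Ω : Type*} [MeasurableSpace Ω] {P : Measure Ω}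
    {q m n : ℕ} (hq : 0 < q) (hn : m ≤ n) {X : Ω → ℝ} (hX : Measurable X)
    (hXrange : ∀ ω, X ω ∈ Ico (0 : ℝ) 1) {g : ℝ → ℝ≥0∞}
    (hlaw : P.map X = volume.withDensity g) {c : ℕ → ℝ≥0∞}
    (hconst : ∀ j < q ^ m, ∀ᵐ x ∂(volume.restrict
      (Ico ((j : ℝ) / (q : ℝ) ^ m) (((j : ℝ) + 1) / (q : ℝ) ^ m))), g x = c j)
    (k : ℤ) {t : Set ℝ} (ht : MeasurableSet t) :
    P ((fun ω => ⌊(q : ℝ) ^ n * X ω⌋) ⁻¹' {k} ∩ (fun ω => Int.fract ((q : ℝ) ^ n * X ω)) ⁻¹' t)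
      = P ((fun ω => ⌊(q : ℝ) ^ n * X ω⌋) ⁻¹' {k}) * volume.restrict (Ico 0 1) t := by
  set N : ℝ := (q : ℝ) ^ n
  have hN : 0 < N := by positivity
  have hevent : ∀ u : Set ℝ,
      (fun ω => ⌊N * X ω⌋) ⁻¹' {k} ∩ (fun ω => Int.fract (N * X ω)) ⁻¹' u
        = X ⁻¹' ((fun x => N * x - k) ⁻¹' (u ∩ Ico 0 1)) :=
    fun u => ext fun ω => Int.floor_eq_and_fract_mem_iff _ _ _
  have hfloor :
      (fun ω => ⌊N * X ω⌋) ⁻¹' {k} = X ⁻¹' ((fun x => N * x - k) ⁻¹' (univ ∩ Ico 0 1)) := by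
    simpa using hevent univ
  by_cases hk : 0 ≤ k ∧ k < q ^ n
  · obtain ⟨κ, rfl⟩ := Int.eq_ofNat_of_zero_le hk.1
    simp only [Int.cast_natCast] at hevent hfloor
    have hκ : κ < q ^ (n - m) * q ^ m := by
      rw [← pow_add, Nat.sub_add_cancel hn]; exact_mod_cast hk.2
    have hprob : ∀ u, MeasurableSet u → P (X ⁻¹' ((fun x => N * x - κ) ⁻¹' (u ∩ Ico 0 1)))
        = c (κ / q ^ (n - m)) * (ENNReal.ofReal |N⁻¹| * volume (u ∩ Ico 0 1)) := fun u hu => by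
      rw [measure_preimage_eq_const_mul_of_ae_eq hX hlaw (hconst _ (Nat.div_lt_of_lt_mul hκ))
        ((preimage_mono inter_subset_right).trans (preimage_pow_mul_sub_Ico_subset hq hn κ)),
        Real.volume_preimage_mul_sub hN.ne']
      exact (measurable_const_mul N |>.sub_const _) (hu.inter measurableSet_Ico)
    rw [hevent, hfloor, hprob t ht, hprob univ MeasurableSet.univ, Measure.restrict_apply ht]
    simp only [univ_inter, Real.volume_Ico, sub_zero, ENNReal.ofReal_one, mul_one, mul_assoc]
  · have hempty : (fun ω => ⌊N * X ω⌋) ⁻¹' {k} = ∅ := by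
      refine eq_empty_of_forall_notMem fun ω hω => hk ?_
      obtain ⟨hX0, hX1⟩ := hXrange ω
      rw [← mem_singleton_iff.1 hω]
      exact ⟨Int.floor_nonneg.2 (by positivity), Int.floor_lt.2 (by push_cast; nlinarith)⟩
    simp [hempty]

theorem stmt3_general
    {Ω : Type*} [MeasurableSpace Ω] (ℙ : Measure Ω) [IsProbabilityMeasure ℙ]
    (q : ℕ) (hq : 2 ≤ q) (m : ℕ)
    (f : ℝ → ℝ)
    (X : Ω → ℝ) (hX : Measurable X) (hXrange : ∀ ω, X ω ∈ Set.Ico (0:ℝ) 1)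
    (hlaw : Measure.map X ℙ = volume.withDensity (fun x => ENNReal.ofReal (f x)))
    -- `f` is a.e. constant `c j` on each interval `[j·q^{-m}, (j+1)·q^{-m})`
    (c : ℕ → ℝ)
    (hconst : ∀ j < q ^ m,
      ∀ᵐ x ∂(volume.restrict
        (Set.Ico ((j : ℝ) / (q : ℝ) ^ m) (((j : ℝ) + 1) / (q : ℝ) ^ m))), f x = c j)
    (n : ℕ) (hn : m ≤ n) :
    -- `⌊q^n X⌋` (the first `n` digits) is independent of `T^n(X)`, and
    -- `T^n(X)` is uniformly distributed on `[0,1)`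
    ProbabilityTheory.IndepFun (fun ω => ⌊(q : ℝ) ^ n * X ω⌋)
        (fun ω => (T q)^[n] (X ω)) ℙ
      ∧ Measure.map (fun ω => (T q)^[n] (X ω)) ℙ = volume.restrict (Set.Ico (0:ℝ) 1) := by
  have hTX : (fun ω => (T q)^[n] (X ω)) = fun ω => Int.fract ((q : ℝ) ^ n * X ω) :=
    funext fun ω => T_iterate_of_mem_Ico q n (hXrange ω)
  have hdensity : ∀ j < q ^ m, ∀ᵐ x ∂(volume.restrict
      (Ico ((j : ℝ) / (q : ℝ) ^ m) (((j : ℝ) + 1) / (q : ℝ) ^ m))),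
        ENNReal.ofReal (f x) = ENNReal.ofReal (c j) :=
    fun j hj => (hconst j hj).mono fun x hx => by rw [hx]
  rw [hTX]
  exact indepFun_and_map_eq_of_measure_fiber_inter ((hX.const_mul _).floor)
    ((hX.const_mul _).fract) fun k t ht =>
      measure_floor_eq_inter_fract_mem (by omega) hn hX hXrange hlaw hdensity k ht

theorem stmt3
    {Ω : Type*} [MeasurableSpace Ω] (ℙ : Measure Ω) [IsProbabilityMeasure ℙ]
    (q : ℕ) (hq : 2 ≤ q) (m : ℕ) (hm : 1 ≤ m)
    (f : ℝ → ℝ) (hf_meas : Measurable f) (hf_nonneg : ∀ x, 0 ≤ f x)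
    (hf_supp : ∀ x, x ∉ Set.Ico (0:ℝ) 1 → f x = 0)
    (X : Ω → ℝ) (hX : Measurable X) (hXrange : ∀ ω, X ω ∈ Set.Ico (0:ℝ) 1)
    (hlaw : Measure.map X ℙ = volume.withDensity (fun x => ENNReal.ofReal (f x)))
    -- `f` is a.e. constant `c j` on each interval `[j·q^{-m}, (j+1)·q^{-m})`
    (c : ℕ → ℝ)
    (hconst : ∀ j < q ^ m,
      ∀ᵐ x ∂(volume.restrict
        (Set.Ico ((j : ℝ) / (q : ℝ) ^ m) (((j : ℝ) + 1) / (q : ℝ) ^ m))), f x = c j)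
    (n : ℕ) (hn : m ≤ n) :
    -- `⌊q^n X⌋` (the first `n` digits) is independent of `T^n(X)`, and
    -- `T^n(X)` is uniformly distributed on `[0,1)`
    ProbabilityTheory.IndepFun (fun ω => ⌊(q : ℝ) ^ n * X ω⌋)
        (fun ω => (T q)^[n] (X ω)) ℙ
      ∧ Measure.map (fun ω => (T q)^[n] (X ω)) ℙ = volume.restrict (Set.Ico (0:ℝ) 1) :=
  stmt3_general ℙ q hq m f X hX hXrange hlaw c hconst n hn
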